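/- arXiv:0806.1637 — 2 statements merged into one kernel-verified Lean document; each statement's English description precedes it below -/
import Mathlib

section
/- Let x, y : ℤ → ℝ² be sequences with sufficient decay so that the defining sums of ω₊(x,y) and ω₊(y,x) converge absolutely, and suppose x has zero mean in both components: Σ_{k∈ℤ} x₁(k) = Σ_{k∈ℤ} x₂(k) = 0. Then ω₊(x,y) = − ω₊(y,x). -/
/-- Summand of the discrete symplectic form `ω₊`. -/
noncomputable def omegaPlusTerm (x y : ℤ → ℝ × ℝ) (n : ℤ) : ℝ :=
  (y n).1 * (∑' k : ℤ, if k ≤ n then (x k).2 else 0) +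
    (y n).2 * (∑' k : ℤ, if k ≤ n - 1 then (x k).1 else 0)

/-- The discrete symplectic form `ω₊`. -/
noncomputable def omegaPlus (x y : ℤ → ℝ × ℝ) : ℝ := ∑' n : ℤ, omegaPlusTerm x y n

lemma aux_summable (a b : ℤ → ℝ) (ha : Summable fun k => |a k|)
    (hb : Summable fun k => |b k|) (c : ℤ → ℤ) :
    Summable fun p : ℤ × ℤ => a p.1 * (if p.2 ≤ c p.1 then b p.2 else 0) := by
  apply Summable.of_abs
  apply Summable.of_nonneg_of_le (fun _ => abs_nonneg _) _
    (ha.mul_of_nonneg hb (fun _ => abs_nonneg _) (fun _ => abs_nonneg _))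
  intro p
  by_cases h : p.2 ≤ c p.1 <;> simp [h, abs_mul]
  positivity

lemma omegaPlus_eq (x y : ℤ → ℝ × ℝ)
    (hx1 : Summable fun k => |(x k).1|) (hx2 : Summable fun k => |(x k).2|)
    (hy1 : Summable fun k => |(y k).1|) (hy2 : Summable fun k => |(y k).2|) :
    omegaPlus x y = ∑' p : ℤ × ℤ,
      ((y p.1).1 * (if p.2 ≤ p.1 then (x p.2).2 else 0) +
        (y p.1).2 * (if p.2 ≤ p.1 - 1 then (x p.2).1 else 0)) := by
  have h1 := aux_summable (fun n => (y n).1) (fun k => (x k).2) hy1 hx2 id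
  have h2 := aux_summable (fun n => (y n).2) (fun k => (x k).1) hy2 hx1 (· - 1)
  simp only [id] at h1
  rw [Summable.tsum_prod' (h1.add h2) (fun b => (h1.add h2).prod_factor b)]
  unfold omegaPlus omegaPlusTerm
  congr 1; funext n
  rw [Summable.tsum_add (h1.prod_factor n) (h2.prod_factor n)]
  simp only [tsum_mul_left]

/-- Antisymmetry of `ω₊` on zero-mean sequences: if both components of `x`
sum to zero, then `ω₊(x,y) = −ω₊(y,x)`. -/
theorem stmt3 (x y : ℤ → ℝ × ℝ)
    (hx1 : Summable fun k => |(x k).1|) (hx2 : Summable fun k => |(x k).2|)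
    (hy1 : Summable fun k => |(y k).1|) (hy2 : Summable fun k => |(y k).2|)
    (hxy : Summable fun n => |omegaPlusTerm x y n|)
    (hyx : Summable fun n => |omegaPlusTerm y x n|)
    (hmean1 : (∑' k : ℤ, (x k).1) = 0) (hmean2 : (∑' k : ℤ, (x k).2) = 0) :
    omegaPlus x y = - omegaPlus y x := by
  set f1 : ℤ × ℤ → ℝ := fun p => (y p.1).1 * (if p.2 ≤ p.1 then (x p.2).2 else 0) with hf1def
  set f2 : ℤ × ℤ → ℝ := fun p => (y p.1).2 * (if p.2 ≤ p.1 - 1 then (x p.2).1 else 0) with hf2def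
  set g1 : ℤ × ℤ → ℝ := fun p => (x p.1).1 * (if p.2 ≤ p.1 then (y p.2).2 else 0) with hg1def
  set g2 : ℤ × ℤ → ℝ := fun p => (x p.1).2 * (if p.2 ≤ p.1 - 1 then (y p.2).1 else 0) with hg2def
  have hf1 : Summable f1 := aux_summable _ _ hy1 hx2 id
  have hf2 : Summable f2 := aux_summable _ _ hy2 hx1 (· - 1)
  have hg1 : Summable g1 := aux_summable _ _ hx1 hy2 id
  have hg2 : Summable g2 := aux_summable _ _ hx2 hy1 (· - 1)
  have e := Equiv.prodComm ℤ ℤ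
  have hg1' : Summable fun p : ℤ × ℤ => g1 (p.2, p.1) :=
    ((Equiv.prodComm ℤ ℤ).summable_iff (f := g1)).2 hg1
  have hg2' : Summable fun p : ℤ × ℤ => g2 (p.2, p.1) :=
    ((Equiv.prodComm ℤ ℤ).summable_iff (f := g2)).2 hg2
  have hswap1 : (∑' p : ℤ × ℤ, g1 p) = ∑' p : ℤ × ℤ, g1 (p.2, p.1) :=
    ((Equiv.prodComm ℤ ℤ).tsum_eq g1).symm
  have hswap2 : (∑' p : ℤ × ℤ, g2 p) = ∑' p : ℤ × ℤ, g2 (p.2, p.1) :=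
    ((Equiv.prodComm ℤ ℤ).tsum_eq g2).symm
  -- pointwise identities
  have key1 : ∀ p : ℤ × ℤ, f1 p + g2 (p.2, p.1) = (y p.1).1 * (x p.2).2 := by
    intro ⟨n, k⟩
    simp only [hf1def, hg2def]
    by_cases h : k ≤ n
    · have h' : ¬ (n ≤ k - 1) := by omega
      simp [h, h']
    · have h' : n ≤ k - 1 := by omega
      simp [h, h']; ring
  have key2 : ∀ p : ℤ × ℤ, f2 p + g1 (p.2, p.1) = (y p.1).2 * (x p.2).1 := by
    intro ⟨n, k⟩
    simp only [hf2def, hg1def]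
    by_cases h : k ≤ n - 1
    · have h' : ¬ (n ≤ k) := by omega
      simp [h, h']
    · have h' : n ≤ k := by omega
      simp [h, h']; ring
  have hprod1 : Summable fun p : ℤ × ℤ => (y p.1).1 * (x p.2).2 := by
    apply summable_mul_of_summable_norm (f := fun n => (y n).1) (g := fun k => (x k).2) <;>
      simpa [Real.norm_eq_abs]
  have hprod2 : Summable fun p : ℤ × ℤ => (y p.1).2 * (x p.2).1 := by
    apply summable_mul_of_summable_norm (f := fun n => (y n).2) (g := fun k => (x k).1) <;>
      simpa [Real.norm_eq_abs]
  have sum1 : (∑' p : ℤ × ℤ, (f1 p + g2 (p.2, p.1))) = 0 := by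
    have : (∑' p : ℤ × ℤ, (f1 p + g2 (p.2, p.1))) = ∑' p : ℤ × ℤ, (y p.1).1 * (x p.2).2 := by
      exact tsum_congr key1
    rw [this, Summable.tsum_prod' hprod1 (fun b => hprod1.prod_factor b)]
    simp [tsum_mul_left, hmean2]
  have sum2 : (∑' p : ℤ × ℤ, (f2 p + g1 (p.2, p.1))) = 0 := by
    have : (∑' p : ℤ × ℤ, (f2 p + g1 (p.2, p.1))) = ∑' p : ℤ × ℤ, (y p.1).2 * (x p.2).1 := by
      exact tsum_congr key2
    rw [this, Summable.tsum_prod' hprod2 (fun b => hprod2.prod_factor b)]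
    simp [tsum_mul_left, hmean1]
  have hxy' : omegaPlus x y = (∑' p, f1 p) + (∑' p, f2 p) := by
    rw [omegaPlus_eq x y hx1 hx2 hy1 hy2, Summable.tsum_add hf1 hf2]
  have hyx' : omegaPlus y x = (∑' p, g1 p) + (∑' p, g2 p) := by
    rw [omegaPlus_eq y x hy1 hy2 hx1 hx2, Summable.tsum_add hg1 hg2]
  have main : omegaPlus x y + omegaPlus y x = 0 := by
    rw [hxy', hyx', hswap1, hswap2]
    have := Summable.tsum_add hf1 hg2'
    have := Summable.tsum_add hf2 hg1'
    calc (∑' p, f1 p) + (∑' p, f2 p) +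
          ((∑' p : ℤ × ℤ, g1 (p.2, p.1)) + (∑' p : ℤ × ℤ, g2 (p.2, p.1)))
        = (∑' p : ℤ × ℤ, (f1 p + g2 (p.2, p.1))) +
          (∑' p : ℤ × ℤ, (f2 p + g1 (p.2, p.1))) := by
          rw [Summable.tsum_add hf1 hg2', Summable.tsum_add hf2 hg1']; ring
      _ = 0 := by rw [sum1, sum2]; ring
  linarith
end

section
/- Let a > 0 and let x, y : ℤ → ℝ² with x ∈ ℓ²_{−a}(ℤ, ℝ²) and y ∈ ℓ²_a(ℤ, ℝ²), where ‖x‖²_{ℓ²_a} := Σ_{k∈ℤ} e^{2ak}(x₁(k)² + x₂(k)²). Then ω₊(x,y) is absolutely convergent and |ω₊(x,y)| ≤ (1/(1 − e^{−a})) ‖x‖_{ℓ²_{−a}} ‖y‖_{ℓ²_a}. -/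
/-- The squared norm of the weighted space `ℓ²_a(ℤ, ℝ²)`. -/
noncomputable def wNormSq (a : ℝ) (x : ℤ → ℝ × ℝ) : ℝ :=
  ∑' k : ℤ, Real.exp (2 * a * k) * ((x k).1 ^ 2 + (x k).2 ^ 2)


lemma exp_sq' (t : ℝ) : Real.exp t ^ 2 = Real.exp (2 * t) := by
  rw [sq, ← Real.exp_add]; ring_nf

lemma aux_sqrt_cs (p q s t : ℝ) (hp : 0 ≤ p) (hq : 0 ≤ q) (hs : 0 ≤ s) (ht : 0 ≤ t) :
    Real.sqrt p * Real.sqrt q + Real.sqrt s * Real.sqrt t ≤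
      Real.sqrt (p + s) * Real.sqrt (q + t) := by
  have key : (Real.sqrt p * Real.sqrt q + Real.sqrt s * Real.sqrt t) ^ 2 ≤ (p + s) * (q + t) := by
    nlinarith [sq_nonneg (Real.sqrt p * Real.sqrt t - Real.sqrt s * Real.sqrt q),
      Real.sq_sqrt hp, Real.sq_sqrt hq, Real.sq_sqrt hs, Real.sq_sqrt ht,
      Real.sqrt_nonneg p, Real.sqrt_nonneg q, Real.sqrt_nonneg s, Real.sqrt_nonneg t,
      mul_nonneg (Real.sqrt_nonneg p) (Real.sqrt_nonneg q),
      mul_nonneg (Real.sqrt_nonneg s) (Real.sqrt_nonneg t)]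
  calc Real.sqrt p * Real.sqrt q + Real.sqrt s * Real.sqrt t
      = Real.sqrt ((Real.sqrt p * Real.sqrt q + Real.sqrt s * Real.sqrt t) ^ 2) :=
        (Real.sqrt_sq (by positivity)).symm
    _ ≤ Real.sqrt ((p + s) * (q + t)) := Real.sqrt_le_sqrt key
    _ = Real.sqrt (p + s) * Real.sqrt (q + t) := Real.sqrt_mul (by linarith) _

lemma tsum_cs {f g : ℤ → ℝ} (hf0 : ∀ k, 0 ≤ f k) (hg0 : ∀ k, 0 ≤ g k)
    (hf : Summable fun k => f k ^ 2) (hg : Summable fun k => g k ^ 2) :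
    ∑' k, f k * g k ≤ Real.sqrt (∑' k, f k ^ 2) * Real.sqrt (∑' k, g k ^ 2) := by
  have hfg : Summable fun k => f k * g k := by
    refine Summable.of_nonneg_of_le (fun k => mul_nonneg (hf0 k) (hg0 k)) (fun k => ?_)
      ((hf.add hg).div_const 2)
    nlinarith [sq_nonneg (f k - g k)]
  refine Summable.tsum_le_of_sum_le hfg fun s => ?_
  have h1 : (∑ i ∈ s, f i * g i) ≤
      Real.sqrt (∑ i ∈ s, f i ^ 2) * Real.sqrt (∑ i ∈ s, g i ^ 2) := by
    have h := Finset.sum_mul_sq_le_sq_mul_sq s f g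
    calc (∑ i ∈ s, f i * g i)
        = Real.sqrt ((∑ i ∈ s, f i * g i) ^ 2) :=
          (Real.sqrt_sq (Finset.sum_nonneg fun i _ => mul_nonneg (hf0 i) (hg0 i))).symm
      _ ≤ Real.sqrt ((∑ i ∈ s, f i ^ 2) * ∑ i ∈ s, g i ^ 2) := Real.sqrt_le_sqrt h
      _ = _ := Real.sqrt_mul (Finset.sum_nonneg fun i _ => sq_nonneg _) _
  refine h1.trans (mul_le_mul (Real.sqrt_le_sqrt ?_) (Real.sqrt_le_sqrt ?_)
    (Real.sqrt_nonneg _) (Real.sqrt_nonneg _))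
  · exact Summable.sum_le_tsum s (fun i _ => sq_nonneg _) hf
  · exact Summable.sum_le_tsum s (fun i _ => sq_nonneg _) hg

lemma hasSum_row (a : ℝ) (ha : 0 < a) (n : ℤ) :
    HasSum (fun k : ℤ => if k ≤ n then Real.exp (a * ((k : ℝ) - (n : ℝ))) else 0)
      (1 - Real.exp (-a))⁻¹ := by
  have hgeo : HasSum (fun j : ℕ => Real.exp (-a) ^ j) (1 - Real.exp (-a))⁻¹ :=
    hasSum_geometric_of_lt_one (Real.exp_pos _).le (Real.exp_lt_one_iff.2 (by linarith))
  have hinj : Function.Injective (fun j : ℕ => n - (j : ℤ)) := by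
    intro i j h; simp only at h; omega
  refine (hinj.hasSum_iff ?_).mp ?_
  · intro k hk
    rw [if_neg]
    intro hkn
    exact hk ⟨(n - k).toNat, by simp only; omega⟩
  · convert hgeo using 1
    funext j
    simp only [Function.comp]
    rw [if_pos (by omega), ← Real.exp_nat_mul]
    congr 1
    push_cast
    ring

lemma hasSum_col (a : ℝ) (ha : 0 < a) (k : ℤ) :
    HasSum (fun n : ℤ => if k ≤ n then Real.exp (a * ((k : ℝ) - (n : ℝ))) else 0)
      (1 - Real.exp (-a))⁻¹ := by
  have hgeo : HasSum (fun j : ℕ => Real.exp (-a) ^ j) (1 - Real.exp (-a))⁻¹ :=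
    hasSum_geometric_of_lt_one (Real.exp_pos _).le (Real.exp_lt_one_iff.2 (by linarith))
  have hinj : Function.Injective (fun j : ℕ => k + (j : ℤ)) := by
    intro i j h; simp only at h; omega
  refine (hinj.hasSum_iff ?_).mp ?_
  · intro n hn
    rw [if_neg]
    intro hkn
    exact hn ⟨(n - k).toNat, by simp only; omega⟩
  · convert hgeo using 1
    funext j
    simp only [Function.comp]
    rw [if_pos (by omega), ← Real.exp_nat_mul]
    congr 1
    push_cast
    ring

lemma schur (a : ℝ) (ha : 0 < a) (u : ℤ → ℝ) (hu0 : ∀ k, 0 ≤ u k)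
    (hu : Summable fun k => u k ^ 2) :
    (∀ n : ℤ, Summable fun k : ℤ =>
        (if k ≤ n then Real.exp (a * ((k : ℝ) - (n : ℝ))) else 0) * u k) ∧
    (Summable fun n : ℤ =>
        (∑' k : ℤ, (if k ≤ n then Real.exp (a * ((k : ℝ) - (n : ℝ))) else 0) * u k) ^ 2) ∧
    (∑' n : ℤ, (∑' k : ℤ, (if k ≤ n then Real.exp (a * ((k : ℝ) - (n : ℝ))) else 0) * u k) ^ 2)
      ≤ ((1 - Real.exp (-a))⁻¹) ^ 2 * ∑' k, u k ^ 2 := by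
  set b := Real.exp (-a) with hbdef
  have hb1 : b < 1 := Real.exp_lt_one_iff.2 (by linarith)
  have hr0 : (0:ℝ) < (1 - b)⁻¹ := by
    have : 0 < 1 - b := by linarith
    positivity
  set w : ℤ → ℤ → ℝ := fun n k => if k ≤ n then Real.exp (a * ((k : ℝ) - (n : ℝ))) else 0
    with hwdef
  have hw0 : ∀ n k, 0 ≤ w n k := by
    intro n k; dsimp [w]; split <;> positivity
  have hw1 : ∀ n k, w n k ≤ 1 := by
    intro n k; dsimp [w]; split
    · rename_i h
      rw [show (1:ℝ) = Real.exp 0 from (Real.exp_zero).symm]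
      apply Real.exp_le_exp.2
      have : (k:ℝ) ≤ (n:ℝ) := by exact_mod_cast h
      nlinarith
    · norm_num
  -- summability of each row product
  have hrowsum : ∀ n, Summable (w n) := fun n => (hasSum_row a ha n).summable
  have hcolsum : ∀ k, Summable (fun n => w n k) := fun k => (hasSum_col a ha k).summable
  have hwu : ∀ n, Summable fun k => w n k * u k := by
    intro n
    refine Summable.of_nonneg_of_le (fun k => mul_nonneg (hw0 n k) (hu0 k)) (fun k => ?_)
      (((hrowsum n).add hu).div_const 2)
    have h1 := hw1 n k
    have h2 := hw0 n k
    have h3 := hu0 k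
    nlinarith [sq_nonneg (w n k - u k)]
  refine ⟨hwu, ?_⟩
  have hwu2 : ∀ n, Summable fun k => w n k * u k ^ 2 := by
    intro n
    refine Summable.of_nonneg_of_le (fun k => mul_nonneg (hw0 n k) (sq_nonneg _))
      (fun k => ?_) hu
    nlinarith [hw1 n k, hw0 n k, sq_nonneg (u k)]
  -- per-row Cauchy-Schwarz
  have hCS : ∀ n, (∑' k, w n k * u k) ^ 2 ≤ (1 - b)⁻¹ * ∑' k, w n k * u k ^ 2 := by
    intro n
    have key : ∑' k, w n k * u k ≤
        Real.sqrt (∑' k, Real.sqrt (w n k) ^ 2) *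
          Real.sqrt (∑' k, (Real.sqrt (w n k) * u k) ^ 2) := by
      have := tsum_cs (f := fun k => Real.sqrt (w n k)) (g := fun k => Real.sqrt (w n k) * u k)
        (fun k => Real.sqrt_nonneg _) (fun k => mul_nonneg (Real.sqrt_nonneg _) (hu0 k))
        ?_ ?_
      · refine le_of_eq_of_le ?_ this
        apply tsum_congr; intro k
        rw [← mul_assoc, Real.mul_self_sqrt (hw0 n k)]
      · apply (hrowsum n).congr; intro k; rw [Real.sq_sqrt (hw0 n k)]
      · apply (hwu2 n).congr; intro k
        rw [mul_pow, Real.sq_sqrt (hw0 n k)]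
    have hA : (∑' k, Real.sqrt (w n k) ^ 2) = (1 - b)⁻¹ := by
      rw [tsum_congr fun k => Real.sq_sqrt (hw0 n k)]
      exact (hasSum_row a ha n).tsum_eq
    have hB : (∑' k, (Real.sqrt (w n k) * u k) ^ 2) = ∑' k, w n k * u k ^ 2 := by
      apply tsum_congr; intro k; rw [mul_pow, Real.sq_sqrt (hw0 n k)]
    rw [hA, hB] at key
    have hnn : 0 ≤ ∑' k, w n k * u k :=
      tsum_nonneg fun k => mul_nonneg (hw0 n k) (hu0 k)
    have hBnn : 0 ≤ ∑' k, w n k * u k ^ 2 :=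
      tsum_nonneg fun k => mul_nonneg (hw0 n k) (sq_nonneg _)
    calc (∑' k, w n k * u k) ^ 2
        ≤ (Real.sqrt ((1-b)⁻¹) * Real.sqrt (∑' k, w n k * u k ^ 2)) ^ 2 := by
          apply sq_le_sq' <;> nlinarith [Real.sqrt_nonneg ((1-b)⁻¹),
            Real.sqrt_nonneg (∑' k, w n k * u k ^ 2)]
      _ = (1-b)⁻¹ * ∑' k, w n k * u k ^ 2 := by
          rw [mul_pow, Real.sq_sqrt hr0.le, Real.sq_sqrt hBnn]
  -- Fubini
  have hcoltsum : ∀ k, ∑' n, w n k * u k ^ 2 = (1 - b)⁻¹ * u k ^ 2 := by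
    intro k
    rw [tsum_mul_right, (hasSum_col a ha k).tsum_eq]
  have hcolprodsum : ∀ k, Summable fun n => w n k * u k ^ 2 :=
    fun k => (hcolsum k).mul_right _
  have hF : Summable (Function.uncurry fun k n => w n k * u k ^ 2) := by
    refine (summable_prod_of_nonneg ?_).2 ⟨fun k => hcolprodsum k, ?_⟩
    · intro p
      exact mul_nonneg (hw0 p.2 p.1) (sq_nonneg _)
    · apply Summable.congr (hu.mul_left ((1-b)⁻¹))
      intro k
      exact (hcoltsum k).symm
  have hfub : ∑' (n : ℤ) (k : ℤ), w n k * u k ^ 2 = ∑' (k : ℤ) (n : ℤ), w n k * u k ^ 2 :=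
    Summable.tsum_comm' hF hcolprodsum hwu2
  -- summability of inner sums over n
  have hrowsumble : Summable fun n => ∑' k, w n k * u k ^ 2 := by
    have hFswap : Summable (Function.uncurry fun n k => w n k * u k ^ 2) := by
      have := (Equiv.prodComm ℤ ℤ).summable_iff.2 hF
      apply this.congr
      intro p
      rfl
    refine ((summable_prod_of_nonneg ?_).1 hFswap).2
    intro p
    exact mul_nonneg (hw0 p.1 p.2) (sq_nonneg _)
  have hsum_g2 : Summable fun n => (∑' k, w n k * u k) ^ 2 := by
    refine Summable.of_nonneg_of_le (fun n => sq_nonneg _) (fun n => hCS n)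
      (hrowsumble.mul_left _)
  refine ⟨hsum_g2, ?_⟩
  calc ∑' n, (∑' k, w n k * u k) ^ 2
      ≤ ∑' n, (1 - b)⁻¹ * ∑' k, w n k * u k ^ 2 :=
        Summable.tsum_le_tsum hCS hsum_g2 (hrowsumble.mul_left _)
    _ = (1 - b)⁻¹ * ∑' (n : ℤ) (k : ℤ), w n k * u k ^ 2 := tsum_mul_left
    _ = (1 - b)⁻¹ * ∑' (k : ℤ) (n : ℤ), w n k * u k ^ 2 := by rw [hfub]
    _ = (1 - b)⁻¹ * ∑' (k : ℤ), (1 - b)⁻¹ * u k ^ 2 := by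
        rw [tsum_congr hcoltsum]
    _ = ((1 - b)⁻¹) ^ 2 * ∑' k, u k ^ 2 := by
        rw [tsum_mul_left]; ring

/-- Continuity of `ω₊` on the dual pairing `ℓ²_{−a} × ℓ²_a`:
`|ω₊(x,y)| ≤ (1 − e^{−a})⁻¹ ‖x‖_{ℓ²_{−a}} ‖y‖_{ℓ²_a}`, the defining sums being
absolutely convergent. -/
theorem stmt4 (a : ℝ) (ha : 0 < a) (x y : ℤ → ℝ × ℝ)
    (hx : Summable fun k : ℤ => Real.exp (2 * (-a) * k) * ((x k).1 ^ 2 + (x k).2 ^ 2))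
    (hy : Summable fun k : ℤ => Real.exp (2 * a * k) * ((y k).1 ^ 2 + (y k).2 ^ 2)) :
    (Summable fun n => |omegaPlusTerm x y n|) ∧
      |omegaPlus x y| ≤
        (1 / (1 - Real.exp (-a))) * Real.sqrt (wNormSq (-a) x) * Real.sqrt (wNormSq a y) := by

  have hb1 : Real.exp (-a) < 1 := Real.exp_lt_one_iff.2 (by linarith)
  have h1b : (0:ℝ) < 1 - Real.exp (-a) := by linarith
  set r : ℝ := (1 - Real.exp (-a))⁻¹ with hrdef
  have hr0 : 0 < r := by positivity
  set u1 : ℤ → ℝ := fun k => Real.exp (-(a * (k : ℝ))) * |(x k).1| with hu1def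
  set u2 : ℤ → ℝ := fun k => Real.exp (-(a * (k : ℝ))) * |(x k).2| with hu2def
  set v1 : ℤ → ℝ := fun n => Real.exp (a * (n : ℝ)) * |(y n).1| with hv1def
  set v2 : ℤ → ℝ := fun n => Real.exp (a * (n : ℝ)) * |(y n).2| with hv2def
  have hu10 : ∀ k, 0 ≤ u1 k := fun k => by positivity
  have hu20 : ∀ k, 0 ≤ u2 k := fun k => by positivity
  have hv10 : ∀ k, 0 ≤ v1 k := fun k => by positivity
  have hv20 : ∀ k, 0 ≤ v2 k := fun k => by positivity
  -- squared identities
  have hu1eq : ∀ k : ℤ, u1 k ^ 2 = Real.exp (2 * (-a) * k) * (x k).1 ^ 2 := by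
    intro k
    rw [hu1def]
    simp only
    rw [mul_pow, exp_sq', sq_abs, show 2 * -(a * (k:ℝ)) = 2 * (-a) * k from by ring]
  have hu2eq : ∀ k : ℤ, u2 k ^ 2 = Real.exp (2 * (-a) * k) * (x k).2 ^ 2 := by
    intro k
    rw [hu2def]
    simp only
    rw [mul_pow, exp_sq', sq_abs, show 2 * -(a * (k:ℝ)) = 2 * (-a) * k from by ring]
  have hv1eq : ∀ k : ℤ, v1 k ^ 2 = Real.exp (2 * a * k) * (y k).1 ^ 2 := by
    intro k
    rw [hv1def]
    simp only
    rw [mul_pow, exp_sq', sq_abs, show 2 * (a * (k:ℝ)) = 2 * a * k from by ring]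
  have hv2eq : ∀ k : ℤ, v2 k ^ 2 = Real.exp (2 * a * k) * (y k).2 ^ 2 := by
    intro k
    rw [hv2def]
    simp only
    rw [mul_pow, exp_sq', sq_abs, show 2 * (a * (k:ℝ)) = 2 * a * k from by ring]
  -- summability of squares
  have hU1 : Summable fun k => u1 k ^ 2 := by
    refine Summable.of_nonneg_of_le (fun k => sq_nonneg _) (fun k => ?_) hx
    rw [hu1eq k]
    have := Real.exp_pos (2 * (-a) * (k:ℝ))
    nlinarith [sq_nonneg (x k).2]
  have hU2 : Summable fun k => u2 k ^ 2 := by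
    refine Summable.of_nonneg_of_le (fun k => sq_nonneg _) (fun k => ?_) hx
    rw [hu2eq k]
    have := Real.exp_pos (2 * (-a) * (k:ℝ))
    nlinarith [sq_nonneg (x k).1]
  have hV1 : Summable fun k => v1 k ^ 2 := by
    refine Summable.of_nonneg_of_le (fun k => sq_nonneg _) (fun k => ?_) hy
    rw [hv1eq k]
    have := Real.exp_pos (2 * a * (k:ℝ))
    nlinarith [sq_nonneg (y k).2]
  have hV2 : Summable fun k => v2 k ^ 2 := by
    refine Summable.of_nonneg_of_le (fun k => sq_nonneg _) (fun k => ?_) hy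
    rw [hv2eq k]
    have := Real.exp_pos (2 * a * (k:ℝ))
    nlinarith [sq_nonneg (y k).1]
  -- norm identities
  have hXeq : (∑' k, u1 k ^ 2) + (∑' k, u2 k ^ 2) = wNormSq (-a) x := by
    rw [← Summable.tsum_add hU1 hU2, wNormSq]
    apply tsum_congr
    intro k
    rw [hu1eq k, hu2eq k]
    ring
  have hYeq : (∑' k, v1 k ^ 2) + (∑' k, v2 k ^ 2) = wNormSq a y := by
    rw [← Summable.tsum_add hV1 hV2, wNormSq]
    apply tsum_congr
    intro k
    rw [hv1eq k, hv2eq k]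
    ring
  obtain ⟨hrow1, hg1sq, hg1le⟩ := schur a ha u1 hu10 hU1
  obtain ⟨hrow2, hg2sq, hg2le⟩ := schur a ha u2 hu20 hU2
  set g1 : ℤ → ℝ := fun n =>
    ∑' k : ℤ, (if k ≤ n then Real.exp (a * ((k : ℝ) - (n : ℝ))) else 0) * u1 k with hg1def
  set g2 : ℤ → ℝ := fun n =>
    ∑' k : ℤ, (if k ≤ n then Real.exp (a * ((k : ℝ) - (n : ℝ))) else 0) * u2 k with hg2def
  have hg10 : ∀ n, 0 ≤ g1 n := fun n => tsum_nonneg fun k =>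
    mul_nonneg (by split <;> positivity) (hu10 k)
  have hg20 : ∀ n, 0 ≤ g2 n := fun n => tsum_nonneg fun k =>
    mul_nonneg (by split <;> positivity) (hu20 k)
  -- inner-sum identities
  have hkey1 : ∀ n : ℤ, (fun k : ℤ => if k ≤ n then |(x k).1| else 0)
      = fun k : ℤ => Real.exp (a * (n:ℝ)) *
        ((if k ≤ n then Real.exp (a * ((k : ℝ) - (n : ℝ))) else 0) * u1 k) := by
    intro n
    funext k
    by_cases h : k ≤ n
    · simp only [if_pos h, hu1def]
      rw [show Real.exp (a * (n:ℝ)) * (Real.exp (a * ((k:ℝ) - n)) * (Real.exp (-(a * k)) * |(x k).1|))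
          = (Real.exp (a * (n:ℝ)) * Real.exp (a * ((k:ℝ) - n)) * Real.exp (-(a * k))) * |(x k).1| from by ring,
        ← Real.exp_add, ← Real.exp_add,
        show a * (n:ℝ) + a * ((k:ℝ) - n) + -(a * k) = 0 from by ring, Real.exp_zero, one_mul]
    · simp [h]
  have hkey2 : ∀ n : ℤ, (fun k : ℤ => if k ≤ n then |(x k).2| else 0)
      = fun k : ℤ => Real.exp (a * (n:ℝ)) *
        ((if k ≤ n then Real.exp (a * ((k : ℝ) - (n : ℝ))) else 0) * u2 k) := by
    intro n
    funext k
    by_cases h : k ≤ n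
    · simp only [if_pos h, hu2def]
      rw [show Real.exp (a * (n:ℝ)) * (Real.exp (a * ((k:ℝ) - n)) * (Real.exp (-(a * k)) * |(x k).2|))
          = (Real.exp (a * (n:ℝ)) * Real.exp (a * ((k:ℝ) - n)) * Real.exp (-(a * k))) * |(x k).2| from by ring,
        ← Real.exp_add, ← Real.exp_add,
        show a * (n:ℝ) + a * ((k:ℝ) - n) + -(a * k) = 0 from by ring, Real.exp_zero, one_mul]
    · simp [h]
  have habs1sum : ∀ n : ℤ, Summable fun k : ℤ => if k ≤ n then |(x k).1| else 0 := by
    intro n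
    rw [hkey1 n]
    exact (hrow1 n).mul_left _
  have habs2sum : ∀ n : ℤ, Summable fun k : ℤ => if k ≤ n then |(x k).2| else 0 := by
    intro n
    rw [hkey2 n]
    exact (hrow2 n).mul_left _
  have habs1tsum : ∀ n : ℤ, (∑' k : ℤ, if k ≤ n then |(x k).1| else 0)
      = Real.exp (a * (n:ℝ)) * g1 n := by
    intro n
    rw [hkey1 n, tsum_mul_left]
  have habs2tsum : ∀ n : ℤ, (∑' k : ℤ, if k ≤ n then |(x k).2| else 0)
      = Real.exp (a * (n:ℝ)) * g2 n := by
    intro n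
    rw [hkey2 n, tsum_mul_left]
  -- monotonicity in n of g1
  have hmono : ∀ n : ℤ, (∑' k : ℤ, if k ≤ n - 1 then |(x k).1| else 0)
      ≤ Real.exp (a * (n:ℝ)) * g1 n := by
    intro n
    rw [← habs1tsum n]
    refine Summable.tsum_le_tsum (fun k => ?_) (habs1sum (n - 1)) (habs1sum n)
    by_cases h : k ≤ n - 1
    · rw [if_pos h, if_pos (by omega)]
    · rw [if_neg h]
      split <;> positivity
  -- bound on the term
  have hterm : ∀ n : ℤ, |omegaPlusTerm x y n| ≤ v1 n * g2 n + v2 n * g1 n := by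
    intro n
    have s2 : Summable fun k : ℤ => if k ≤ n then (x k).2 else 0 := by
      apply Summable.of_abs
      apply (habs2sum n).congr
      intro k
      rw [apply_ite abs, abs_zero]
    have s1 : Summable fun k : ℤ => if k ≤ n - 1 then (x k).1 else 0 := by
      apply Summable.of_abs
      apply (habs1sum (n-1)).congr
      intro k
      rw [apply_ite abs, abs_zero]
    have habs2 : |∑' k : ℤ, if k ≤ n then (x k).2 else 0|
        ≤ Real.exp (a * (n:ℝ)) * g2 n := by
      rw [← habs2tsum n]
      calc |∑' k : ℤ, if k ≤ n then (x k).2 else 0|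
          ≤ ∑' k : ℤ, |if k ≤ n then (x k).2 else 0| := by
            have := norm_tsum_le_tsum_norm (f := fun k : ℤ => if k ≤ n then (x k).2 else 0) ?_
            · simpa [Real.norm_eq_abs] using this
            · apply (habs2sum n).congr
              intro k
              rw [Real.norm_eq_abs, apply_ite abs, abs_zero]
        _ = ∑' k : ℤ, if k ≤ n then |(x k).2| else 0 := by
            apply tsum_congr
            intro k
            rw [apply_ite abs, abs_zero]
    have habs1 : |∑' k : ℤ, if k ≤ n - 1 then (x k).1 else 0|
        ≤ Real.exp (a * (n:ℝ)) * g1 n := by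
      refine le_trans ?_ (hmono n)
      calc |∑' k : ℤ, if k ≤ n - 1 then (x k).1 else 0|
          ≤ ∑' k : ℤ, |if k ≤ n - 1 then (x k).1 else 0| := by
            have := norm_tsum_le_tsum_norm (f := fun k : ℤ => if k ≤ n - 1 then (x k).1 else 0) ?_
            · simpa [Real.norm_eq_abs] using this
            · apply (habs1sum (n-1)).congr
              intro k
              rw [Real.norm_eq_abs, apply_ite abs, abs_zero]
        _ = ∑' k : ℤ, if k ≤ n - 1 then |(x k).1| else 0 := by
            apply tsum_congr
            intro k
            rw [apply_ite abs, abs_zero]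
    calc |omegaPlusTerm x y n|
        ≤ |(y n).1| * |∑' k : ℤ, if k ≤ n then (x k).2 else 0|
          + |(y n).2| * |∑' k : ℤ, if k ≤ n - 1 then (x k).1 else 0| := by
          rw [omegaPlusTerm]
          refine (abs_add_le _ _).trans ?_
          rw [abs_mul, abs_mul]
      _ ≤ |(y n).1| * (Real.exp (a * (n:ℝ)) * g2 n)
          + |(y n).2| * (Real.exp (a * (n:ℝ)) * g1 n) :=
          add_le_add (mul_le_mul_of_nonneg_left habs2 (abs_nonneg _))
            (mul_le_mul_of_nonneg_left habs1 (abs_nonneg _))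
      _ = v1 n * g2 n + v2 n * g1 n := by
          rw [hv1def, hv2def]
          ring
  -- summability of the products
  have hprod12 : Summable fun n => v1 n * g2 n := by
    refine Summable.of_nonneg_of_le (fun n => mul_nonneg (hv10 n) (hg20 n)) (fun n => ?_)
      ((hV1.add hg2sq).div_const 2)
    nlinarith [sq_nonneg (v1 n - g2 n)]
  have hprod21 : Summable fun n => v2 n * g1 n := by
    refine Summable.of_nonneg_of_le (fun n => mul_nonneg (hv20 n) (hg10 n)) (fun n => ?_)
      ((hV2.add hg1sq).div_const 2)
    nlinarith [sq_nonneg (v2 n - g1 n)]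
  have habsSummable : Summable fun n => |omegaPlusTerm x y n| :=
    Summable.of_nonneg_of_le (fun n => abs_nonneg _) hterm (hprod12.add hprod21)
  refine ⟨habsSummable, ?_⟩
  -- sqrt bounds on g sums
  have hsg2 : Real.sqrt (∑' n, g2 n ^ 2) ≤ r * Real.sqrt (∑' k, u2 k ^ 2) := by
    refine (Real.sqrt_le_sqrt hg2le).trans_eq ?_
    rw [Real.sqrt_mul (by positivity), Real.sqrt_sq hr0.le]
  have hsg1 : Real.sqrt (∑' n, g1 n ^ 2) ≤ r * Real.sqrt (∑' k, u1 k ^ 2) := by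
    refine (Real.sqrt_le_sqrt hg1le).trans_eq ?_
    rw [Real.sqrt_mul (by positivity), Real.sqrt_sq hr0.le]
  have hchain : (∑' n, |omegaPlusTerm x y n|) ≤
      r * Real.sqrt (wNormSq a y) * Real.sqrt (wNormSq (-a) x) := by
    calc (∑' n, |omegaPlusTerm x y n|)
        ≤ ∑' n, (v1 n * g2 n + v2 n * g1 n) :=
          Summable.tsum_le_tsum hterm habsSummable (hprod12.add hprod21)
      _ = (∑' n, v1 n * g2 n) + (∑' n, v2 n * g1 n) := Summable.tsum_add hprod12 hprod21
      _ ≤ Real.sqrt (∑' n, v1 n ^ 2) * Real.sqrt (∑' n, g2 n ^ 2)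
          + Real.sqrt (∑' n, v2 n ^ 2) * Real.sqrt (∑' n, g1 n ^ 2) :=
          add_le_add (tsum_cs hv10 hg20 hV1 hg2sq) (tsum_cs hv20 hg10 hV2 hg1sq)
      _ ≤ Real.sqrt (∑' n, v1 n ^ 2) * (r * Real.sqrt (∑' k, u2 k ^ 2))
          + Real.sqrt (∑' n, v2 n ^ 2) * (r * Real.sqrt (∑' k, u1 k ^ 2)) :=
          add_le_add (mul_le_mul_of_nonneg_left hsg2 (Real.sqrt_nonneg _))
            (mul_le_mul_of_nonneg_left hsg1 (Real.sqrt_nonneg _))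
      _ = r * (Real.sqrt (∑' n, v1 n ^ 2) * Real.sqrt (∑' k, u2 k ^ 2)
          + Real.sqrt (∑' n, v2 n ^ 2) * Real.sqrt (∑' k, u1 k ^ 2)) := by ring
      _ ≤ r * (Real.sqrt ((∑' n, v1 n ^ 2) + ∑' n, v2 n ^ 2)
          * Real.sqrt ((∑' k, u2 k ^ 2) + ∑' k, u1 k ^ 2)) := by
          refine mul_le_mul_of_nonneg_left ?_ hr0.le
          exact aux_sqrt_cs _ _ _ _ (tsum_nonneg fun n => sq_nonneg _)
            (tsum_nonneg fun n => sq_nonneg _) (tsum_nonneg fun n => sq_nonneg _)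
            (tsum_nonneg fun n => sq_nonneg _)
      _ = r * Real.sqrt (wNormSq a y) * Real.sqrt (wNormSq (-a) x) := by
          rw [hYeq, show (∑' k, u2 k ^ 2) + ∑' k, u1 k ^ 2
            = (∑' k, u1 k ^ 2) + ∑' k, u2 k ^ 2 from by ring, hXeq]
          ring
  have homega : |omegaPlus x y| ≤ ∑' n, |omegaPlusTerm x y n| := by
    rw [omegaPlus]
    have := norm_tsum_le_tsum_norm (f := fun n => omegaPlusTerm x y n) ?_
    · simpa [Real.norm_eq_abs] using this
    · simpa [Real.norm_eq_abs] using habsSummable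
  refine (homega.trans hchain).trans_eq ?_
  rw [hrdef, one_div]
  ring
end
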